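/- arXiv:2508.08844 — 5 statements merged into one kernel-verified Lean document; each statement's English description precedes it below -/
import Mathlib

section
/- Let $B(s) = K(s-z_1)(s-z_2)$ with $K=1$ and $z_{1,2} = u \pm iv$ where $u \ge 0$ and $v \ne 0$, and let $n \ge 3$ be an integer. Then the real polynomial $\tilde B(s) = \frac{s^2}{(n-3)!} - \frac{2u\,s}{(n-2)!} + \frac{u^2+v^2}{(n-1)!}$ has no real non-negative root if and only if $u/|v| < \sqrt{n-2}$. -/
/-!
With `k = n - 2` we have `(n - 2)! = k (n - 3)!` and `(n - 1)! = (k + 1) k (n - 3)!`, and completing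
the square gives `k² (k + 1) (n - 3)! B̃(s) = (k + 1) (k s - u)² - (u² - k v²)`. So `B̃` has a
non-negative root iff `u² ≥ k v²`; in that case `k s - u = √((u² - k v²)/(k + 1))` gives a root
with `s ≥ u / k ≥ 0`.
-/

lemma completed_square_eq_zero_iff {k F : ℝ} (hk : 0 < k) (hF : 0 < F) (u v s : ℝ) :
    s ^ 2 / F - 2 * u * s / (k * F) + (u ^ 2 + v ^ 2) / ((k + 1) * (k * F)) = 0 ↔
      (k + 1) * (k * s - u) ^ 2 = u ^ 2 - k * v ^ 2 := by
  have hden : k ^ 2 * (k + 1) * F ≠ 0 := by positivity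
  rw [show s ^ 2 / F - 2 * u * s / (k * F) + (u ^ 2 + v ^ 2) / ((k + 1) * (k * F))
      = ((k + 1) * (k * s - u) ^ 2 - (u ^ 2 - k * v ^ 2)) / (k ^ 2 * (k + 1) * F) by
    field_simp; ring, div_eq_zero_iff, or_iff_left hden, sub_eq_zero]

lemma exists_nonneg_completed_square_eq_iff {k u : ℝ} (hk : 0 < k) (hu : 0 ≤ u) (D : ℝ) :
    (∃ s, 0 ≤ s ∧ (k + 1) * (k * s - u) ^ 2 = D) ↔ 0 ≤ D := by
  constructor
  · rintro ⟨s, -, rfl⟩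
    positivity
  · intro hD
    set t := Real.sqrt (D / (k + 1))
    refine ⟨(u + t) / k, by positivity, ?_⟩
    rw [mul_div_cancel₀ _ hk.ne', add_sub_cancel_left, Real.sq_sqrt (by positivity)]
    field_simp

lemma div_abs_lt_sqrt_iff {u v : ℝ} (hu : 0 ≤ u) (hv : v ≠ 0) (k : ℝ) :
    u / |v| < Real.sqrt k ↔ u ^ 2 < k * v ^ 2 := by
  rw [Real.lt_sqrt (by positivity), div_pow, sq_abs, div_lt_iff₀ (by positivity)]

theorem stmt_0 (u v : ℝ) (hu : 0 ≤ u) (hv : v ≠ 0) (n : ℕ) (hn : 3 ≤ n) :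
    (∀ s : ℝ, 0 ≤ s →
      s ^ 2 / (Nat.factorial (n - 3) : ℝ) - 2 * u * s / (Nat.factorial (n - 2) : ℝ)
        + (u ^ 2 + v ^ 2) / (Nat.factorial (n - 1) : ℝ) ≠ 0)
      ↔ u / |v| < Real.sqrt ((n : ℝ) - 2) := by
  obtain ⟨m, rfl⟩ : ∃ m, n = m + 3 := ⟨n - 3, by omega⟩
  have hk : (0 : ℝ) < m + 1 := by positivity
  have hfact₂ : ((m + 3 - 2).factorial : ℝ) = (m + 1) * (m + 3 - 3).factorial := by
    simp [Nat.factorial_succ]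
  have hfact₁ : ((m + 3 - 1).factorial : ℝ) = (m + 1 + 1) * ((m + 1) * (m + 3 - 3).factorial) := by
    simp [Nat.factorial_succ]
  rw [show ((m + 3 : ℕ) : ℝ) - 2 = m + 1 by push_cast; ring, div_abs_lt_sqrt_iff hu hv,
    ← not_le, ← sub_nonneg, ← exists_nonneg_completed_square_eq_iff hk hu]
  simp only [hfact₁, hfact₂, ne_eq,
    completed_square_eq_zero_iff hk (Nat.cast_pos.mpr (Nat.factorial_pos _))]
  simp
end

section
/- Let $B$ be a real polynomial of degree $m$, $n > m$, and define $Q(\sigma,t) = \sum_{j=0}^m \binom{n-1}{j} B^{(j)}(\sigma) t^{m-j}$. Suppose $Q(0,t) \ge 0$ for all $t \in (0,+\infty)$ and $Q(0,t^\star) = 0$ for some $t^\star > 0$, and suppose $Q(0,\tau) > 0$ for at least one $\tau \in (0, t^\star)$. Then $\frac{\partial}{\partial \sigma} Q(\sigma, t^\star)\big|_{\sigma = 0} = n\, (t^\star)^{m-n+1} \int_0^{t^\star} Q(0,\tau)\, \tau^{n-1-m}\, d\tau > 0$. -/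
/-!
With `N = n - 1`, the sums `P_N(σ, t) = ∑_{i+k=N} C(N,i) B^{(i)}(σ) t^k = ((t + ∂_σ)^N B)(σ)` satisfy
`t^{N-m} Q = P_N`, Pascal's rule `P_{N+1} = t P_N + ∂_σ P_N`, `∂_t P_{N+1} = (N+1) P_N`, and
`P_{N+1}(σ, 0) = B^{(N+1)}(σ) = 0`. Integrating in `t` and evaluating at the zero `t⋆` of `P_N(0, ·)`
gives `∂_σ P_N(0, t⋆) = n ∫_0^{t⋆} P_N(0, τ) dτ`, which is positive because the integrand is
continuous, nonnegative and somewhere positive.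
-/

open Finset Polynomial Set MeasureTheory intervalIntegral

theorem intervalIntegral_pos_of_continuous_of_nonneg_of_pos {f : ℝ → ℝ} {a b c : ℝ}
    (hf : Continuous f) (hnonneg : ∀ x ∈ Ioo a b, 0 ≤ f x) (hc : c ∈ Ioo a b) (hfc : 0 < f c) :
    0 < ∫ x in a..b, f x := by
  have hab : a < b := hc.1.trans hc.2
  have h₀ : 0 ≤ᵐ[volume.restrict (uIoc a b)] f := by
    rw [Filter.EventuallyLE, uIoc_of_le hab.le]
    refine ae_restrict_of_ae_eq_of_ae_restrict Ioo_ae_eq_Ioc ?_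
    rw [ae_restrict_iff' measurableSet_Ioo]
    filter_upwards with x hx using hnonneg x hx
  rw [integral_pos_iff_support_of_nonneg_ae' h₀ (hf.intervalIntegrable a b)]
  refine ⟨hab, ?_⟩
  have hU : IsOpen (f ⁻¹' Ioi 0 ∩ Ioo a b) := (isOpen_Ioi.preimage hf).inter isOpen_Ioo
  refine (hU.measure_pos volume ⟨c, hfc, hc⟩).trans_le (measure_mono ?_)
  exact fun x hx => ⟨hx.1.ne', Ioo_subset_Ioc_self hx.2⟩

noncomputable def binomDerivSum (N : ℕ) (B : ℝ[X]) (σ t : ℝ) : ℝ :=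
  ∑ ij ∈ antidiagonal N, (N.choose ij.1 : ℝ) * (derivative^[ij.1] B).eval σ * t ^ ij.2

theorem binomDerivSum_zero (B : ℝ[X]) (σ t : ℝ) : binomDerivSum 0 B σ t = B.eval σ := by
  simp [binomDerivSum]

theorem binomDerivSum_succ (N : ℕ) (B : ℝ[X]) (σ t : ℝ) :
    binomDerivSum (N + 1) B σ t = t * binomDerivSum N B σ t + binomDerivSum N (derivative B) σ t := by
  simp only [binomDerivSum, mul_assoc]
  rw [sum_antidiagonal_choose_succ_mul (fun i k => (derivative^[i] B).eval σ * t ^ k), mul_sum]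
  congr 1
  · refine sum_congr rfl fun ij _ => by ring
  · refine sum_congr rfl fun ij hij => ?_
    rw [← Nat.choose_symm_of_eq_add (mem_antidiagonal.mp hij).symm, Function.iterate_succ_apply]

theorem binomDerivSum_at_zero_of_natDegree_lt {N : ℕ} {B : ℝ[X]} (hB : B.natDegree < N) (σ : ℝ) :
    binomDerivSum N B σ 0 = 0 := by
  rw [binomDerivSum, Nat.sum_antidiagonal_eq_sum_range_succ_mk, sum_range_succ,
    iterate_derivative_eq_zero hB, eval_zero, mul_zero, zero_mul, add_zero]
  exact sum_eq_zero fun j hj => by rw [zero_pow (by grind), mul_zero]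

theorem continuous_binomDerivSum (N : ℕ) (B : ℝ[X]) (σ : ℝ) :
    Continuous (binomDerivSum N B σ) := by
  unfold binomDerivSum; fun_prop

theorem hasDerivAt_binomDerivSum_left (N : ℕ) (B : ℝ[X]) (σ t : ℝ) :
    HasDerivAt (fun σ => binomDerivSum N B σ t) (binomDerivSum N (derivative B) σ t) σ := by
  unfold binomDerivSum
  refine HasDerivAt.fun_sum fun ij _ => ?_
  rw [← Function.iterate_succ_apply, Function.iterate_succ_apply']
  exact (((derivative^[ij.1] B).hasDerivAt σ).const_mul _).mul_const _

theorem hasDerivAt_binomDerivSum_succ_right (N : ℕ) (B : ℝ[X]) (σ t : ℝ) :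
    HasDerivAt (binomDerivSum (N + 1) B σ) ((N + 1) * binomDerivSum N B σ t) t := by
  induction N generalizing B t with
  | zero =>
    rw [funext (binomDerivSum_succ 0 B σ)]
    simp only [binomDerivSum_zero]
    simpa using ((hasDerivAt_id t).mul_const (B.eval σ)).add_const ((derivative B).eval σ)
  | succ N ih =>
    rw [funext (binomDerivSum_succ (N + 1) B σ)]
    refine (((hasDerivAt_id' t).fun_mul (ih B t)).fun_add (ih (derivative B) t)).congr_deriv ?_
    rw [binomDerivSum_succ N B σ t]
    push_cast
    ring

theorem succ_mul_integral_binomDerivSum {N : ℕ} {B : ℝ[X]} (hB : B.natDegree ≤ N) (σ t : ℝ) :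
    (N + 1) * ∫ τ in 0..t, binomDerivSum N B σ τ = binomDerivSum (N + 1) B σ t := by
  rw [← intervalIntegral.integral_const_mul, integral_eq_sub_of_hasDerivAt
    (fun τ _ => hasDerivAt_binomDerivSum_succ_right N B σ τ)
    ((continuous_const.mul (continuous_binomDerivSum N B σ)).intervalIntegrable _ _),
    binomDerivSum_at_zero_of_natDegree_lt (Nat.lt_succ_of_le hB), sub_zero]

theorem binomDerivSum_derivative_eq_integral {N : ℕ} {B : ℝ[X]} (hB : B.natDegree ≤ N)
    {σ t : ℝ} (ht : binomDerivSum N B σ t = 0) :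
    binomDerivSum N (derivative B) σ t = (N + 1) * ∫ τ in 0..t, binomDerivSum N B σ τ := by
  rw [succ_mul_integral_binomDerivSum hB, binomDerivSum_succ, ht, mul_zero, zero_add]

theorem pow_mul_sum_range_eq_binomDerivSum {N m : ℕ} (hmN : m ≤ N) {B : ℝ[X]}
    (hB : B.natDegree ≤ m) (σ t : ℝ) :
    t ^ (N - m) * ∑ j ∈ range (m + 1), (N.choose j : ℝ) * (derivative^[j] B).eval σ * t ^ (m - j)
      = binomDerivSum N B σ t := by
  rw [binomDerivSum, Nat.sum_antidiagonal_eq_sum_range_succ_mk, mul_sum]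
  refine (sum_congr rfl fun j hj => ?_).trans
    (sum_subset (range_subset_range.mpr (by omega)) fun j _ hj => ?_)
  · rw [mul_left_comm, ← pow_add, show N - m + (m - j) = N - j by grind]
  · rw [iterate_derivative_eq_zero (by grind), eval_zero, mul_zero, zero_mul]

theorem stmt_7 (n m : ℕ) (hm : m < n) (B : Polynomial ℝ) (hdeg : B.natDegree = m)
    (Q : ℝ → ℝ → ℝ)
    (hQ : ∀ σ t : ℝ, Q σ t = ∑ j ∈ Finset.range (m + 1), ((n - 1).choose j : ℝ) *
        (Polynomial.eval σ ((Polynomial.derivative)^[j] B)) * t ^ (m - j))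
    (tstar : ℝ) (htstar : 0 < tstar)
    (hnonneg : ∀ t : ℝ, 0 < t → 0 ≤ Q 0 t)
    (hzero : Q 0 tstar = 0)
    (hpos : ∃ τ ∈ Set.Ioo 0 tstar, 0 < Q 0 τ) :
    deriv (fun σ : ℝ => Q σ tstar) 0
        = (n : ℝ) * tstar ^ ((m : ℤ) - n + 1) *
          ∫ τ in (0:ℝ)..tstar, Q 0 τ * τ ^ (n - 1 - m) ∧
    0 < deriv (fun σ : ℝ => Q σ tstar) 0 := by
  obtain ⟨N, rfl⟩ : ∃ N, n = N + 1 := ⟨n - 1, by omega⟩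
  simp only [Nat.add_sub_cancel] at hQ ⊢
  have hP (σ t : ℝ) : t ^ (N - m) * Q σ t = binomDerivSum N B σ t := by
    rw [hQ]; exact pow_mul_sum_range_eq_binomDerivSum (by omega) hdeg.le σ t
  have hscale : tstar ^ ((m : ℤ) - (N + 1 : ℕ) + 1) = (tstar ^ (N - m))⁻¹ := by
    rw [show (m : ℤ) - (N + 1 : ℕ) + 1 = -(N - m : ℕ) by omega, zpow_neg, zpow_natCast]
  have hderiv : deriv (fun σ => Q σ tstar) 0
      = binomDerivSum N (derivative B) 0 tstar / tstar ^ (N - m) := by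
    have hQP : (fun σ => Q σ tstar) = fun σ => binomDerivSum N B σ tstar / tstar ^ (N - m) :=
      funext fun σ => by rw [← hP, mul_div_cancel_left₀ _ (by positivity)]
    rw [hQP, ((hasDerivAt_binomDerivSum_left N B 0 tstar).div_const _).deriv]
  have hintegral : ∫ τ in (0:ℝ)..tstar, Q 0 τ * τ ^ (N - m)
      = ∫ τ in (0:ℝ)..tstar, binomDerivSum N B 0 τ :=
    integral_congr fun τ _ => by rw [← hP, mul_comm]
  have hintegral_pos : 0 < ∫ τ in (0:ℝ)..tstar, binomDerivSum N B 0 τ := by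
    obtain ⟨τ₀, hτ₀, hQτ₀⟩ := hpos
    refine intervalIntegral_pos_of_continuous_of_nonneg_of_pos (continuous_binomDerivSum N B 0)
      (fun τ hτ => ?_) hτ₀ ?_
    · rw [← hP]; exact mul_nonneg (pow_nonneg hτ.1.le _) (hnonneg τ hτ.1)
    · rw [← hP]; exact mul_pos (pow_pos hτ₀.1 _) hQτ₀
  have hvariation := binomDerivSum_derivative_eq_integral (σ := 0) (hdeg.trans_le (by omega : m ≤ N))
    (by rw [← hP, hzero, mul_zero])
  rw [hderiv, hscale, hintegral, hvariation]
  push_cast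
  exact ⟨by ring, div_pos (mul_pos (by positivity) hintegral_pos) (by positivity)⟩
end

section
/- Let $Q$ be a real polynomial of degree $m$. Then $Q(t) \ge 0$ for all $t \in [0, +\infty)$ if and only if there exist real polynomials $y_1$ of degree at most $\lfloor m/2 \rfloor$ and $y_2$ of degree at most $\lfloor (m-1)/2 \rfloor$ such that $Q(t-1) = y_1(t)^2 + (t-1)\, y_2(t)^2$ for all $t$. -/
/-!
Polynomials of the form `a² + X b²` are closed under multiplication, by the identity
`(a² + X b²)(p² + X q²) = (a p - X b q)² + X (a q + b p)²`. A polynomial `Q ≥ 0` on `[0, ∞)` of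
positive degree has a factor of this form that is itself `≥ 0` on `[0, ∞)`: `X - r` for a root
`r ≤ 0`, `(X - r)²` for a root `r > 0` (a local minimum of `Q`, hence a double root), and
`(X - |z|)² + X (2|z| - 2 Re z)` for a non-real root `z`. The cofactor is again `≥ 0` on
`[0, ∞)` by continuity, so induction on the degree gives `Q = p² + X q²`. The leading
coefficients of `p²` and `X q²` are squares, so they cannot cancel, which bounds the degrees of
`p` and `q`.
-/

open Polynomial Filter Topology

section SqAddMulSq

variable {R : Type*} [CommRing R]

def sqAddMulSq (c : R) : Submonoid R where
  carrier := {x | ∃ a b, x = a ^ 2 + c * b ^ 2}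
  one_mem' := ⟨1, 0, by ring⟩
  mul_mem' := by
    rintro _ _ ⟨a, b, rfl⟩ ⟨p, q, rfl⟩
    exact ⟨a * p - c * b * q, a * q + b * p, by ring⟩

theorem mem_sqAddMulSq {c x : R} : x ∈ sqAddMulSq c ↔ ∃ a b, x = a ^ 2 + c * b ^ 2 := Iff.rfl

theorem sq_mem_sqAddMulSq (c a : R) : a ^ 2 ∈ sqAddMulSq c := ⟨a, 0, by ring⟩

end SqAddMulSq

namespace Polynomial

theorem C_mem_sqAddMulSq_X {c : ℝ} (hc : 0 ≤ c) : C c ∈ sqAddMulSq (X : ℝ[X]) := by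
  simpa [← C_pow, Real.sq_sqrt hc] using sq_mem_sqAddMulSq X (C √c)

theorem X_sub_C_mem_sqAddMulSq_X {r : ℝ} (hr : r ≤ 0) : X - C r ∈ sqAddMulSq (X : ℝ[X]) :=
  ⟨C √(-r), 1, by rw [← C_pow, Real.sq_sqrt (neg_nonneg.2 hr), C_neg]; ring⟩

theorem X_sq_sub_C_mul_X_add_C_sq_mem_sqAddMulSq_X {b s : ℝ} (h : b ≤ 2 * s) :
    X ^ 2 - C b * X + C (s ^ 2) ∈ sqAddMulSq (X : ℝ[X]) := by
  refine ⟨X - C s, C √(2 * s - b), ?_⟩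
  rw [← C_pow, Real.sq_sqrt (by linarith), C_sub, C_mul, C_pow, map_ofNat]
  ring

section OrderedRing

variable {K : Type*} [CommRing K] [LinearOrder K] [IsStrictOrderedRing K]

theorem eval_nonneg_of_mem_sqAddMulSq_X {P : K[X]} (hP : P ∈ sqAddMulSq X) {t : K}
    (ht : 0 ≤ t) : 0 ≤ P.eval t := by
  obtain ⟨a, b, rfl⟩ := mem_sqAddMulSq.1 hP
  simp only [eval_add, eval_mul, eval_pow, eval_X]
  positivity

theorem natDegree_le_of_eq_sq_add_X_mul_sq {P p q : K[X]} (h : P = p ^ 2 + X * q ^ 2) :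
    p.natDegree ≤ P.natDegree / 2 ∧ q.natDegree ≤ (P.natDegree - 1) / 2 := by
  by_cases hpq : p = 0 ∧ q = 0
  · simp [hpq.1, hpq.2]
  have hlc : (p ^ 2).leadingCoeff + (X * q ^ 2).leadingCoeff ≠ 0 := by
    simp only [leadingCoeff_pow, leadingCoeff_mul, leadingCoeff_X, one_mul]
    have : p.leadingCoeff ≠ 0 ∨ q.leadingCoeff ≠ 0 := by
      simpa only [leadingCoeff_ne_zero, ← not_and_or] using hpq
    rcases this with h | h <;> positivity
  have hdeg := degree_add_eq_of_leadingCoeff_add_ne_zero hlc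
  have hp : (p ^ 2).natDegree ≤ P.natDegree :=
    natDegree_le_natDegree (h ▸ hdeg ▸ le_max_left _ _)
  have hq : (X * q ^ 2).natDegree ≤ P.natDegree :=
    natDegree_le_natDegree (h ▸ hdeg ▸ le_max_right _ _)
  rw [natDegree_pow] at hp
  rcases eq_or_ne q 0 with rfl | hq0
  · exact ⟨by omega, by simp⟩
  rw [natDegree_X_mul (pow_ne_zero 2 hq0), natDegree_pow] at hq
  omega

end OrderedRing

theorem eval_nonneg_of_eval_mul_nonneg {D R : ℝ[X]} (hD0 : D ≠ 0)
    (hD : ∀ t, 0 ≤ t → 0 ≤ D.eval t) (hDR : ∀ t, 0 ≤ t → 0 ≤ (D * R).eval t) {t : ℝ} (ht : 0 ≤ t) :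
    0 ≤ R.eval t := by
  have hroots : ({s | D.IsRoot s} \ {t})ᶜ ∈ 𝓝 t :=
    ((finite_setOfPred_isRoot hD0).sdiff).isClosed.compl_mem_nhds (by simp)
  refine ge_of_tendsto (R.continuous.continuousWithinAt (s := Set.Ioi t)) ?_
  filter_upwards [nhdsWithin_le_nhds hroots, self_mem_nhdsWithin] with s hs (hts : t < s)
  have hDs : 0 < D.eval s :=
    (hD s (ht.trans hts.le)).lt_of_ne' fun h => hs ⟨h, hts.ne'⟩
  exact nonneg_of_mul_nonneg_right (eval_mul (p := D) ▸ hDR s (ht.trans hts.le)) hDs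

theorem sq_X_sub_C_dvd_of_isLocalMin {Q : ℝ[X]} {r : ℝ} (hr : Q.IsRoot r)
    (hmin : IsLocalMin Q.eval r) : (X - C r) ^ 2 ∣ Q := by
  rcases eq_or_ne Q 0 with rfl | hQ
  · exact dvd_zero _
  rw [← le_rootMultiplicity_iff hQ]
  exact (one_lt_rootMultiplicity_iff_isRoot hQ).2
    ⟨hr, by simpa [Polynomial.deriv] using hmin.deriv_eq_zero⟩

theorem exists_isRoot_or_quadratic_dvd {Q : ℝ[X]} (hQ : 0 < Q.natDegree) :
    (∃ r, Q.IsRoot r) ∨ ∃ z : ℂ, z.im ≠ 0 ∧ X ^ 2 - C (2 * z.re) * X + C (‖z‖ ^ 2) ∣ Q := by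
  obtain ⟨z, hz⟩ := IsAlgClosed.exists_aeval_eq_zero ℂ Q (natDegree_pos_iff_degree_pos.1 hQ).ne'
  by_cases him : z.im = 0
  · refine .inl ⟨z.re, ?_⟩
    rw [show z = algebraMap ℝ ℂ z.re from Complex.ext rfl (by simp [him]),
      aeval_algebraMap_apply, map_eq_zero, coe_aeval_eq_eval] at hz
    exact hz
  · exact .inr ⟨z, him, quadratic_dvd_of_aeval_eq_zero_im_ne_zero Q hz him⟩

theorem exists_eq_mul_mem_sqAddMulSq_X {Q : ℝ[X]} (hQ : ∀ t, 0 ≤ t → 0 ≤ Q.eval t)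
    (hdeg : 0 < Q.natDegree) :
    ∃ D R, Q = D * R ∧ 0 < D.natDegree ∧ D ∈ sqAddMulSq (X : ℝ[X]) := by
  rcases exists_isRoot_or_quadratic_dvd hdeg with ⟨r, hr⟩ | ⟨z, hz, R, hR⟩
  · rcases le_or_gt r 0 with hr0 | hr0
    · obtain ⟨R, hR⟩ := dvd_iff_isRoot.2 hr
      exact ⟨_, R, hR, by simp, X_sub_C_mem_sqAddMulSq_X hr0⟩
    · have hmin : IsLocalMin Q.eval r := by
        filter_upwards [Ioi_mem_nhds hr0] with t ht
        exact hr.eq_zero ▸ hQ t (le_of_lt ht)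
      obtain ⟨R, hR⟩ := sq_X_sub_C_dvd_of_isLocalMin hr hmin
      exact ⟨_, R, hR, by simp [natDegree_pow], sq_mem_sqAddMulSq _ _⟩
  · refine ⟨_, R, hR, by rw [(isMonicOfDegree_sub_add_two _ _).natDegree_eq]; norm_num, ?_⟩
    refine X_sq_sub_C_mul_X_add_C_sq_mem_sqAddMulSq_X ?_
    linarith [Complex.re_le_norm z]

theorem mem_sqAddMulSq_X_of_nonneg {Q : ℝ[X]} (hQ : ∀ t, 0 ≤ t → 0 ≤ Q.eval t) :
    Q ∈ sqAddMulSq (X : ℝ[X]) := by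
  induction hn : Q.natDegree using Nat.strong_induction_on generalizing Q with
  | _ n ih =>
  rcases Nat.eq_zero_or_pos n with rfl | hpos
  · rw [eq_C_of_natDegree_eq_zero hn]
    simpa [coeff_zero_eq_eval_zero] using C_mem_sqAddMulSq_X (hQ 0 le_rfl)
  obtain ⟨D, R, rfl, hD, hDmem⟩ := exists_eq_mul_mem_sqAddMulSq_X hQ (hn ▸ hpos)
  have hD0 : D ≠ 0 := ne_zero_of_natDegree_gt hD
  have hR0 : R ≠ 0 := by rintro rfl; simp at hn; omega
  have hRdeg : R.natDegree < n := by rw [← hn, natDegree_mul hD0 hR0]; omega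
  refine mul_mem hDmem (ih _ hRdeg (fun t ht => ?_) rfl)
  exact eval_nonneg_of_eval_mul_nonneg hD0 (fun s => eval_nonneg_of_mem_sqAddMulSq_X hDmem) hQ ht

end Polynomial

theorem stmt_12 (m : ℕ) (Q : Polynomial ℝ) (hdeg : Q.natDegree = m) :
    (∀ t : ℝ, 0 ≤ t → 0 ≤ Q.eval t) ↔
      ∃ y₁ y₂ : Polynomial ℝ, y₁.natDegree ≤ m / 2 ∧ y₂.natDegree ≤ (m - 1) / 2 ∧
        ∀ t : ℝ, Q.eval (t - 1) = (y₁.eval t) ^ 2 + (t - 1) * (y₂.eval t) ^ 2 := by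
  subst hdeg
  constructor
  · intro hQ
    obtain ⟨p, q, hpq⟩ := mem_sqAddMulSq.1 (mem_sqAddMulSq_X_of_nonneg hQ)
    obtain ⟨hp, hq⟩ := natDegree_le_of_eq_sq_add_X_mul_sq hpq
    refine ⟨p.comp (X - C 1), q.comp (X - C 1), ?_, ?_, fun t => by simp [hpq]⟩
    · rwa [natDegree_comp, natDegree_X_sub_C, mul_one]
    · rwa [natDegree_comp, natDegree_X_sub_C, mul_one]
  · rintro ⟨y₁, y₂, -, -, h⟩ t ht
    have hQt := h (t + 1)
    rw [add_sub_cancel_right] at hQt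
    rw [hQt]
    positivity
end

section
/- Let $H(s) = B(s)/(s-\sigma)^n$ with $\sigma < 0$, $B$ of degree $m < n$ with positive leading coefficient $K$, and suppose $Q(\sigma,t) := \sum_{j=0}^m \binom{n-1}{j} B^{(j)}(\sigma) t^{m-j} \ge 0$ for all $t \in (0,\infty)$. Then the function $h(t) = \frac{e^{\sigma t} t^{n-1-m}}{(n-1)!} Q(\sigma,t)$ is non-negative on $[0,\infty)$ and $\int_0^\infty h(t)\, dt = B(0)/(-\sigma)^n$. -/
/-!
Expanding `Q(σ, t)` in powers of `t` writes `h` as a combination of the Gamma densities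
`t ^ (n - 1 - j) * exp (σ t)`, and `∫₀^∞ t ^ k exp (σ t) dt = k! / (-σ) ^ (k + 1)`. The binomial
coefficient `(n - 1).choose j` cancels against these factorials, so the `j`-th term contributes
`B^{(j)}(σ) / j! * (-σ) ^ j / (-σ) ^ n`; summed over `j ≤ deg B` this is the Taylor expansion of
`B` about `σ`, evaluated at `0 = σ + (-σ)`.
-/

open MeasureTheory Real Set Polynomial Finset Nat

theorem Polynomial.eval_add_eq_sum_range_iterate_derivative {R : Type*} [Field R] [CharZero R]
    {p : R[X]} {m : ℕ} (hp : p.natDegree ≤ m) (x y : R) :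
    p.eval (x + y) = ∑ j ∈ range (m + 1), (derivative^[j] p).eval x / j ! * y ^ j := by
  rw [add_comm, ← taylor_eval, eval_eq_sum_range' (n := m + 1) (by rw [natDegree_taylor]; omega)]
  refine sum_congr rfl fun j _ => ?_
  rw [taylor_coeff, ← factorial_smul_hasseDeriv, LinearMap.smul_apply, eval_smul, nsmul_eq_mul,
    mul_div_cancel_left₀ _ (Nat.cast_ne_zero.mpr j.factorial_ne_zero)]

theorem Continuous.nonneg_of_forall_pos {f : ℝ → ℝ} (hf : Continuous f)
    (h : ∀ t, 0 < t → 0 ≤ f t) (t : ℝ) (ht : 0 ≤ t) : 0 ≤ f t := by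
  have : closure (Ioi 0) ⊆ {t | 0 ≤ f t} :=
    (isClosed_le continuous_const hf).closure_subset_iff.mpr h
  exact this (closure_Ioi (0 : ℝ) ▸ ht)

section GammaIntegral

variable {σ : ℝ}

theorem integrableOn_pow_mul_exp_mul_Ioi (hσ : σ < 0) (k : ℕ) :
    IntegrableOn (fun t : ℝ => t ^ k * exp (σ * t)) (Ioi 0) := by
  refine (integrableOn_congr_fun (fun t _ => ?_) measurableSet_Ioi).mp
    (integrableOn_rpow_mul_exp_neg_mul_rpow (p := 1) (s := k) (b := -σ)
      (neg_one_lt_zero.trans_le k.cast_nonneg) one_pos (neg_pos.mpr hσ))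
  simp only [rpow_one, rpow_natCast, neg_neg]

theorem integral_pow_mul_exp_mul_Ioi (hσ : σ < 0) (k : ℕ) :
    ∫ t in Ioi (0 : ℝ), t ^ k * exp (σ * t) = k ! / (-σ) ^ (k + 1) := by
  have h := integral_rpow_mul_exp_neg_mul_Ioi (a := k + 1) (by positivity) (neg_pos.mpr hσ)
  rw [add_sub_cancel_right, Gamma_nat_eq_factorial, ← Nat.cast_succ, rpow_natCast, one_div,
    inv_pow, inv_mul_eq_div] at h
  rw [← h]
  refine setIntegral_congr_fun measurableSet_Ioi fun t _ => ?_
  simp only [rpow_natCast, neg_mul, neg_neg]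

theorem integral_choose_div_factorial_mul_pow_mul_exp_mul_Ioi (hσ : σ < 0) {N j : ℕ}
    (hj : j ≤ N) :
    ∫ t in Ioi (0 : ℝ), (N.choose j : ℝ) / N ! * (t ^ (N - j) * exp (σ * t))
      = (-σ) ^ j / j ! / (-σ) ^ (N + 1) := by
  have hpow : (-σ) ^ (N + 1) = (-σ) ^ (N - j + 1) * (-σ) ^ j := by
    rw [← pow_add]; congr 1; omega
  have hσ' : (-σ) ≠ 0 := by linarith
  rw [integral_const_mul, integral_pow_mul_exp_mul_Ioi hσ, cast_choose ℝ hj, hpow]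
  field_simp

theorem integral_exp_mul_pow_mul_sum_choose (hσ : σ < 0) {N m : ℕ} (hm : m ≤ N) (c : ℕ → ℝ) :
    ∫ t in Ioi (0 : ℝ), exp (σ * t) * t ^ (N - m) / N ! *
        ∑ j ∈ range (m + 1), (N.choose j : ℝ) * c j * t ^ (m - j)
      = (∑ j ∈ range (m + 1), c j / j ! * (-σ) ^ j) / (-σ) ^ (N + 1) := by
  have hexpand : ∀ t, exp (σ * t) * t ^ (N - m) / N ! *
        ∑ j ∈ range (m + 1), (N.choose j : ℝ) * c j * t ^ (m - j)
      = ∑ j ∈ range (m + 1), c j * ((N.choose j : ℝ) / N ! * (t ^ (N - j) * exp (σ * t))) := by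
    intro t
    rw [mul_sum]
    refine sum_congr rfl fun j hj => ?_
    rw [show N - j = N - m + (m - j) by have := mem_range.mp hj; omega, pow_add]
    ring
  simp_rw [hexpand]
  rw [integral_finsetSum _ fun j _ =>
      ((integrableOn_pow_mul_exp_mul_Ioi hσ _).const_mul _).const_mul _, sum_div]
  refine sum_congr rfl fun j hj => ?_
  rw [integral_const_mul, integral_choose_div_factorial_mul_pow_mul_exp_mul_Ioi hσ
    (by have := mem_range.mp hj; omega)]
  ring

end GammaIntegral

theorem stmt_13_general (n m : ℕ) (hm : m < n) (σ : ℝ) (hσ : σ < 0)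
    (B : Polynomial ℝ) (hdeg : B.natDegree = m)
    (hQ : ∀ t : ℝ, 0 < t →
      0 ≤ ∑ j ∈ Finset.range (m + 1), ((n - 1).choose j : ℝ) *
            (Polynomial.eval σ ((Polynomial.derivative)^[j] B)) * t ^ (m - j)) :
    (∀ t : ℝ, 0 ≤ t →
        0 ≤ Real.exp (σ * t) * t ^ (n - 1 - m) / (Nat.factorial (n - 1) : ℝ) *
          ∑ j ∈ Finset.range (m + 1), ((n - 1).choose j : ℝ) *
            (Polynomial.eval σ ((Polynomial.derivative)^[j] B)) * t ^ (m - j)) ∧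
    (∫ t in Set.Ioi (0:ℝ),
        Real.exp (σ * t) * t ^ (n - 1 - m) / (Nat.factorial (n - 1) : ℝ) *
          ∑ j ∈ Finset.range (m + 1), ((n - 1).choose j : ℝ) *
            (Polynomial.eval σ ((Polynomial.derivative)^[j] B)) * t ^ (m - j))
      = B.eval 0 / (-σ) ^ n := by
  have hQ_nonneg := Continuous.nonneg_of_forall_pos (by fun_prop) hQ
  refine ⟨fun t ht => mul_nonneg (by positivity) (hQ_nonneg t ht), ?_⟩
  rw [integral_exp_mul_pow_mul_sum_choose hσ (by omega), Nat.sub_add_cancel (by omega),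
    ← eval_add_eq_sum_range_iterate_derivative hdeg.le, add_neg_cancel]

theorem stmt_13 (n m : ℕ) (hm : m < n) (σ : ℝ) (hσ : σ < 0)
    (B : Polynomial ℝ) (K : ℝ) (hdeg : B.natDegree = m)
    (hlead : B.leadingCoeff = K) (hK : 0 < K)
    (hQ : ∀ t : ℝ, 0 < t →
      0 ≤ ∑ j ∈ Finset.range (m + 1), ((n - 1).choose j : ℝ) *
            (Polynomial.eval σ ((Polynomial.derivative)^[j] B)) * t ^ (m - j)) :
    (∀ t : ℝ, 0 ≤ t →
        0 ≤ Real.exp (σ * t) * t ^ (n - 1 - m) / (Nat.factorial (n - 1) : ℝ) *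
          ∑ j ∈ Finset.range (m + 1), ((n - 1).choose j : ℝ) *
            (Polynomial.eval σ ((Polynomial.derivative)^[j] B)) * t ^ (m - j)) ∧
    (∫ t in Set.Ioi (0:ℝ),
        Real.exp (σ * t) * t ^ (n - 1 - m) / (Nat.factorial (n - 1) : ℝ) *
          ∑ j ∈ Finset.range (m + 1), ((n - 1).choose j : ℝ) *
            (Polynomial.eval σ ((Polynomial.derivative)^[j] B)) * t ^ (m - j))
      = B.eval 0 / (-σ) ^ n :=
  stmt_13_general n m hm σ hσ B hdeg hQ
end

section
/- Let $H'(s) = B(s)/\prod_{i=1}^n (s - p_i)$ with $p_i \in \mathbb{C}$, $\mathrm{Re}(p_i) < 0$, poles occurring in conjugate pairs or real, $\deg B < n$, $B$ real. If the impulse response $h'$ of $H'$ is non-negative on $[0,\infty)$, then the impulse response of $H(s) = B(s)/(s - \sigma)^n$ with $\sigma = \max_i \mathrm{Re}(p_i) < 0$ is also non-negative on $[0,\infty)$. -/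
/-!
Put `z = s - σ` and `P = ∏ᵢ (X + (σ - pᵢ))`, so that `∏ᵢ (s - pᵢ) = P(z)`. The numbers `σ - pᵢ`
have nonnegative real part and are closed under conjugation, so `P` is a product of real linear
and quadratic factors with nonnegative coefficients `P_k`. Then
`H(s) = H'(s) P(z) / zⁿ = H'(s) (1 + ∑_{k<n} P_k / z^(n-k))`,
and `∑_{k<n} P_k / z^(n-k)` is the Laplace transform of
`K(t) = e^{σt} ∑_{k<n} P_k t^(n-1-k) / (n-1-k)! ≥ 0`. So `h = h' + K ∗ h' ≥ 0`.
-/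

open MeasureTheory Set Filter Polynomial Topology ContinuousLinearMap
open scoped Complex Convolution NNReal ComplexConjugate Nat

noncomputable section

def laplace (f : ℝ → ℝ) (s : ℂ) : ℂ := ∫ t in Ioi 0, (f t : ℂ) * cexp (-s * t)

def LaplaceIntegrable (f : ℝ → ℝ) (s : ℂ) : Prop :=
  IntegrableOn (fun t => (f t : ℂ) * cexp (-s * t)) (Ioi 0)

/-- `causalConv f g t = ∫₀ᵗ f τ g (t - τ) dτ`. -/
def causalConv (f g : ℝ → ℝ) : ℝ → ℝ :=
  (Ioi 0).indicator f ⋆[mul ℝ ℝ] (Ioi 0).indicator g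

variable {f g : ℝ → ℝ} {s : ℂ}

lemma LaplaceIntegrable.const_mul (hf : LaplaceIntegrable f s) (c : ℝ) :
    LaplaceIntegrable (fun t => c * f t) s := by
  refine (Integrable.const_mul hf (c : ℂ)).congr (ae_of_all _ fun t => ?_)
  simp [mul_assoc]

lemma laplace_const_mul (f : ℝ → ℝ) (c : ℝ) (s : ℂ) :
    laplace (fun t => c * f t) s = c * laplace f s := by
  simp only [laplace, ← integral_const_mul, Complex.ofReal_mul, mul_assoc]

lemma LaplaceIntegrable.finsetSum {ι : Type*} (S : Finset ι) {f : ι → ℝ → ℝ}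
    (hf : ∀ i ∈ S, LaplaceIntegrable (f i) s) : LaplaceIntegrable (fun t => ∑ i ∈ S, f i t) s := by
  refine (integrable_finsetSum S hf).congr (ae_of_all _ fun t => ?_)
  simp [Finset.sum_mul]

lemma laplace_finsetSum {ι : Type*} (S : Finset ι) {f : ι → ℝ → ℝ}
    (hf : ∀ i ∈ S, LaplaceIntegrable (f i) s) :
    laplace (fun t => ∑ i ∈ S, f i t) s = ∑ i ∈ S, laplace (f i) s := by
  simp only [laplace, Complex.ofReal_sum, Finset.sum_mul]
  exact integral_finsetSum S hf

lemma laplace_add (hf : LaplaceIntegrable f s) (hg : LaplaceIntegrable g s) :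
    laplace (f + g) s = laplace f s + laplace g s := by
  unfold laplace
  simpa [add_mul] using integral_add hf hg

lemma LaplaceIntegrable.mono_re {s₀ : ℂ} (hf : LaplaceIntegrable f s₀) (hs : s₀.re ≤ s.re) :
    LaplaceIntegrable f s := by
  have hmeas : AEStronglyMeasurable (fun t : ℝ => (f t : ℂ) * cexp (-s * t))
      (volume.restrict (Ioi 0)) := by
    have : (fun t : ℝ => (f t : ℂ) * cexp (-s * t))
        = fun t => (f t : ℂ) * cexp (-s₀ * t) * cexp ((s₀ - s) * t) := by
      ext t; rw [mul_assoc, ← Complex.exp_add]; ring_nf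
    rw [this]
    exact hf.aestronglyMeasurable.mul (by fun_prop)
  refine Integrable.mono hf hmeas ?_
  filter_upwards [ae_restrict_mem measurableSet_Ioi] with t ht
  simp only [norm_mul, Complex.norm_exp]
  refine mul_le_mul_of_nonneg_left (Real.exp_le_exp.mpr ?_) (norm_nonneg _)
  simp only [neg_mul, Complex.neg_re, Complex.re_mul_ofReal]
  nlinarith [mem_Ioi.mp ht]

lemma integrableOn_pow_mul_cexp_neg_mul (m : ℕ) {z : ℂ} (hz : 0 < z.re) :
    IntegrableOn (fun t : ℝ => (t : ℂ) ^ m * cexp (-(z * t))) (Ioi 0) := by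
  refine Integrable.mono' (integrableOn_rpow_mul_exp_neg_mul_rpow (s := m)
    (neg_one_lt_zero.trans_le m.cast_nonneg) one_pos hz) (by fun_prop) ?_
  filter_upwards [ae_restrict_mem measurableSet_Ioi] with t ht
  simp [Complex.norm_exp, abs_of_pos (mem_Ioi.mp ht)]

lemma tendsto_pow_mul_cexp_neg_mul (m : ℕ) {z : ℂ} (hz : 0 < z.re) :
    Tendsto (fun t : ℝ => (t : ℂ) ^ m * cexp (-(z * t))) atTop (𝓝 0) := by
  rw [tendsto_zero_iff_norm_tendsto_zero]
  have := (Real.tendsto_pow_mul_exp_neg_atTop_nhds_zero m).comp (tendsto_id.const_mul_atTop hz)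
  refine (this.const_mul (z.re⁻¹ ^ m)).congr' ?_ |>.trans (by simp)
  filter_upwards [eventually_ge_atTop 0] with t ht
  simp [Complex.norm_exp, abs_of_nonneg ht, mul_pow]
  field_simp

lemma hasDerivAt_pow_succ_mul_cexp_neg_mul (z : ℂ) (m : ℕ) (t : ℝ) :
    HasDerivAt (fun u : ℝ => (u : ℂ) ^ (m + 1) * cexp (-(z * u)))
      ((m + 1) * ((t : ℂ) ^ m * cexp (-(z * t))) - z * ((t : ℂ) ^ (m + 1) * cexp (-(z * t))))
      t := by
  have hexp : HasDerivAt (fun w : ℂ => cexp (-(z * w))) (cexp (-(z * t)) * -z) t :=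
    ((hasDerivAt_id (t : ℂ)).const_mul z).neg.cexp.congr_deriv (by simp)
  refine ((hasDerivAt_pow (m + 1) (t : ℂ)).mul hexp).comp_ofReal.congr_deriv ?_
  push_cast
  ring

lemma integral_pow_mul_cexp_neg_mul (m : ℕ) {z : ℂ} (hz : 0 < z.re) :
    ∫ t in Ioi (0 : ℝ), (t : ℂ) ^ m * cexp (-(z * t)) = m ! / z ^ (m + 1) := by
  have hz0 : z ≠ 0 := by rintro rfl; simp at hz
  induction m with
  | zero => simpa [neg_div, ← neg_mul] using integral_exp_mul_complex_Ioi (a := -z) (by simpa) 0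
  | succ m ih =>
    have hI := (integrableOn_pow_mul_cexp_neg_mul m hz).const_mul ((m : ℂ) + 1)
    have hI' := (integrableOn_pow_mul_cexp_neg_mul (m + 1) hz).const_mul z
    have hparts := integral_Ioi_of_hasDerivAt_of_tendsto'
      (fun t _ => hasDerivAt_pow_succ_mul_cexp_neg_mul z m t) (hI.sub hI')
      (tendsto_pow_mul_cexp_neg_mul (m + 1) hz)
    rw [integral_sub hI hI', integral_const_mul, integral_const_mul, ih] at hparts
    simp only [Complex.ofReal_zero, zero_pow m.succ_ne_zero, zero_mul, sub_zero, sub_eq_zero,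
      mul_div_assoc', div_eq_iff (pow_ne_zero _ hz0)] at hparts
    rw [eq_div_iff (pow_ne_zero _ hz0), Nat.factorial_succ]
    push_cast
    linear_combination (-1) * hparts

lemma laplace_pow_mul_exp (m : ℕ) {σ : ℝ} (hs : σ < s.re) :
    LaplaceIntegrable (fun t => t ^ m * Real.exp (σ * t)) s ∧
      laplace (fun t => t ^ m * Real.exp (σ * t)) s = m ! / (s - σ) ^ (m + 1) := by
  have hz : 0 < (s - σ).re := by simpa using hs
  have hshift : (fun t : ℝ => ((t ^ m * Real.exp (σ * t) : ℝ) : ℂ) * cexp (-s * t)) =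
      fun t : ℝ => (t : ℂ) ^ m * cexp (-((s - σ) * t)) := by
    ext t
    push_cast
    rw [mul_assoc, ← Complex.exp_add]
    ring_nf
  exact ⟨by rw [LaplaceIntegrable, hshift]; exact integrableOn_pow_mul_cexp_neg_mul m hz,
    by rw [laplace, hshift]; exact integral_pow_mul_cexp_neg_mul m hz⟩

/-- The inverse Laplace transform of `P (s - σ) / (s - σ)ⁿ - 1` when `P` is monic of degree `n`. -/
def polyExpKernel (P : ℝ[X]) (n : ℕ) (σ t : ℝ) : ℝ :=
  ∑ k ∈ Finset.range n, P.coeff k / (n - 1 - k)! * (t ^ (n - 1 - k) * Real.exp (σ * t))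

lemma polyExpKernel_nonneg {P : ℝ[X]} (hP : ∀ k, 0 ≤ P.coeff k) (n : ℕ) (σ : ℝ) {t : ℝ}
    (ht : 0 ≤ t) : 0 ≤ polyExpKernel P n σ t :=
  Finset.sum_nonneg fun k _ => mul_nonneg (div_nonneg (hP k) (by positivity)) (by positivity)

lemma laplace_polyExpKernel (P : ℝ[X]) (n : ℕ) {σ : ℝ} (hs : σ < s.re) :
    LaplaceIntegrable (polyExpKernel P n σ) s ∧
      laplace (polyExpKernel P n σ) s = ∑ k ∈ Finset.range n, P.coeff k / (s - σ) ^ (n - k) := by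
  have hterm (k : ℕ) := laplace_pow_mul_exp (n - 1 - k) hs
  refine ⟨LaplaceIntegrable.finsetSum _ fun k _ => (hterm k).1.const_mul _, ?_⟩
  unfold polyExpKernel
  rw [laplace_finsetSum _ fun k _ => (hterm k).1.const_mul _]
  refine Finset.sum_congr rfl fun k hk => ?_
  rw [laplace_const_mul, (hterm k).2, show n - 1 - k + 1 = n - k by
    have := Finset.mem_range.mp hk; omega]
  push_cast
  exact div_mul_div_cancel₀ (by exact_mod_cast (n - 1 - k).factorial_ne_zero)

lemma ofReal_convolution_mul_cexp (F G : ℝ → ℝ) (s : ℂ) (t : ℝ) :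
    ((F ⋆[mul ℝ ℝ] G) t : ℂ) * cexp (-s * t) =
      ((fun τ => (F τ : ℂ) * cexp (-s * τ)) ⋆[mul ℂ ℂ] fun τ => (G τ : ℂ) * cexp (-s * τ)) t := by
  rw [convolution_mul, convolution_mul, ← integral_complex_ofReal, ← integral_mul_const]
  congr 1 with τ
  rw [Complex.ofReal_mul, mul_mul_mul_comm, ← Complex.exp_add]
  congr 2
  push_cast
  ring

lemma indicator_ofReal_mul_cexp (f : ℝ → ℝ) (s : ℂ) :
    (fun t => ((Ioi 0).indicator f t : ℝ) * cexp (-s * t)) =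
      (Ioi 0).indicator fun t => (f t : ℂ) * cexp (-s * t) := by
  ext t
  by_cases ht : t ∈ Ioi 0 <;> simp [ht]

lemma causalConv_eq_zero_of_nonpos (f g : ℝ → ℝ) {t : ℝ} (ht : t ≤ 0) : causalConv f g t = 0 := by
  rw [causalConv, convolution_mul]
  refine integral_eq_zero_of_ae (ae_of_all _ fun τ => ?_)
  by_cases hτ : 0 < τ
  · simp [indicator_of_notMem (show t - τ ∉ Ioi 0 by simp; linarith)]
  · simp [indicator_of_notMem (show τ ∉ Ioi 0 by simpa using hτ)]

lemma causalConv_nonneg (hf : ∀ t ∈ Ioi 0, 0 ≤ f t) (hg : ∀ t ∈ Ioi 0, 0 ≤ g t) (t : ℝ) :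
    0 ≤ causalConv f g t :=
  integral_nonneg fun τ => mul_nonneg (indicator_nonneg hf τ) (indicator_nonneg hg _)

lemma laplace_causalConv (hf : LaplaceIntegrable f s) (hg : LaplaceIntegrable g s) :
    LaplaceIntegrable (causalConv f g) s ∧
      laplace (causalConv f g) s = laplace f s * laplace g s := by
  set F : ℝ → ℂ := fun t => ((Ioi 0).indicator f t : ℝ) * cexp (-s * t)
  set G : ℝ → ℂ := fun t => ((Ioi 0).indicator g t : ℝ) * cexp (-s * t)
  have hF : Integrable F := by
    rw [show F = _ from indicator_ofReal_mul_cexp f s]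
    exact hf.integrable_indicator measurableSet_Ioi
  have hG : Integrable G := by
    rw [show G = _ from indicator_ofReal_mul_cexp g s]
    exact hg.integrable_indicator measurableSet_Ioi
  have hconv : (fun t => (causalConv f g t : ℂ) * cexp (-s * t)) = F ⋆[mul ℂ ℂ] G :=
    funext (ofReal_convolution_mul_cexp _ _ s)
  refine ⟨?_, ?_⟩
  · unfold LaplaceIntegrable
    rw [hconv]
    exact (hF.integrable_convolution _ hG).integrableOn
  · unfold laplace
    rw [setIntegral_eq_integral_of_forall_compl_eq_zero fun t ht => by
        simp [causalConv_eq_zero_of_nonpos f g (not_lt.mp ht)],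
      hconv, integral_convolution _ hF hG, indicator_ofReal_mul_cexp, indicator_ofReal_mul_cexp,
      integral_indicator measurableSet_Ioi, integral_indicator measurableSet_Ioi]
    rfl

lemma X_add_C_mem_lifts_nnreal {w : ℂ} (hreal : conj w = w) (hre : 0 ≤ w.re) :
    X + C w ∈ lifts (algebraMap ℝ≥0 ℂ) := by
  rw [← Complex.conj_eq_iff_re.mp hreal]
  exact add_mem (X_mem_lifts _) (C_mem_lifts _ (⟨w.re, hre⟩ : ℝ≥0))

lemma X_add_C_mul_X_add_C_conj_mem_lifts_nnreal {w : ℂ} (hre : 0 ≤ w.re) :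
    (X + C w) * (X + C (conj w)) ∈ lifts (algebraMap ℝ≥0 ℂ) := by
  have hexpand : (X + C w) * (X + C (conj w)) = X ^ 2 + C (w + conj w) * X + C (w * conj w) := by
    rw [C_add, C_mul]
    ring
  have hsum : w + conj w = algebraMap ℝ≥0 ℂ ⟨2 * w.re, by positivity⟩ := Complex.add_conj w
  have hprod : w * conj w = algebraMap ℝ≥0 ℂ ⟨Complex.normSq w, Complex.normSq_nonneg w⟩ :=
    Complex.mul_conj w
  rw [hexpand, hsum, hprod]
  exact add_mem (add_mem (pow_mem (X_mem_lifts _) 2) (mul_mem (C_mem_lifts _ _) (X_mem_lifts _)))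
    (C_mem_lifts _ _)

/-- Conjugate roots pair up into real quadratic factors with nonnegative coefficients. -/
lemma multiset_prod_X_add_C_mem_lifts_nnreal (M : Multiset ℂ) (hconj : M.map conj = M)
    (hre : ∀ w ∈ M, 0 ≤ w.re) : (M.map fun w => X + C w).prod ∈ lifts (algebraMap ℝ≥0 ℂ) := by
  induction M using Multiset.strongInductionOn with
  | ih M IH =>
  rcases Multiset.empty_or_exists_mem M with rfl | ⟨w, hw⟩
  · simp
  obtain ⟨M', rfl⟩ := Multiset.exists_cons_of_mem hw
  rcases eq_or_ne (conj w) w with hreal | hcplx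
  · have hM' : M'.map conj = M' := by simpa [hreal] using hconj
    rw [Multiset.map_cons, Multiset.prod_cons]
    exact mul_mem (X_add_C_mem_lifts_nnreal hreal (hre w hw))
      (IH M' (Multiset.lt_cons_self _ _) hM' fun z hz => hre z (Multiset.mem_cons_of_mem hz))
  · have hw' : conj w ∈ M' := by
      have : conj w ∈ (w ::ₘ M').map conj := Multiset.mem_map_of_mem _ hw
      rw [hconj] at this
      exact (Multiset.mem_cons.mp this).resolve_left hcplx
    obtain ⟨M'', rfl⟩ := Multiset.exists_cons_of_mem hw'
    have hM'' : M''.map conj = M'' := by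
      simp only [Multiset.map_cons, Complex.conj_conj] at hconj
      rwa [Multiset.cons_swap, Multiset.cons_inj_right, Multiset.cons_inj_right] at hconj
    rw [Multiset.map_cons, Multiset.map_cons, Multiset.prod_cons, Multiset.prod_cons, ← mul_assoc]
    exact mul_mem (X_add_C_mul_X_add_C_conj_mem_lifts_nnreal (hre w hw))
      (IH M'' ((Multiset.lt_cons_self _ _).trans (Multiset.lt_cons_self _ _)) hM''
        fun z hz => hre z (Multiset.mem_cons_of_mem (Multiset.mem_cons_of_mem hz)))

lemma exists_nonneg_coeff_map_eq_prod_X_add_C {ι : Type*} [Fintype ι] (w : ι → ℂ)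
    (e : Equiv.Perm ι) (he : ∀ i, w (e i) = conj (w i)) (hre : ∀ i, 0 ≤ (w i).re) :
    ∃ P : ℝ[X], (∀ k, 0 ≤ P.coeff k) ∧ P.map (algebraMap ℝ ℂ) = ∏ i, (X + C (w i)) := by
  have hconj : (Finset.univ.val.map w).map conj = Finset.univ.val.map w := by
    rw [Multiset.map_map, show conj ∘ w = w ∘ e from funext fun i => (he i).symm,
      ← Multiset.map_map, Multiset.map_univ_val_equiv]
  obtain ⟨Q, hQ⟩ := (mem_lifts _).mp <| multiset_prod_X_add_C_mem_lifts_nnreal _ hconj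
    (by simpa using hre)
  refine ⟨Q.map (algebraMap ℝ≥0 ℝ), fun k => by simp, ?_⟩
  rw [Polynomial.map_map, ← IsScalarTower.algebraMap_eq, hQ, Finset.prod_eq_multiset_prod,
    Multiset.map_map]
  rfl

lemma one_add_sum_coeff_div_pow_eq_prod {n : ℕ} {P : ℝ[X]} {w : Fin n → ℂ}
    (hP : P.map (algebraMap ℝ ℂ) = ∏ i, (X + C (w i))) {z : ℂ} (hz : z ≠ 0) :
    1 + ∑ k ∈ Finset.range n, (P.coeff k : ℂ) / z ^ (n - k) = (∏ i, (z + w i)) / z ^ n := by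
  have hmonic : P.Monic :=
    monic_map_iff.mp (hP ▸ monic_prod_of_monic _ _ fun i _ => monic_X_add_C _)
  have hdeg : P.natDegree = n := by
    rw [← natDegree_map_eq_of_injective (algebraMap ℝ ℂ).injective, hP,
      natDegree_prod_of_monic _ _ fun i _ => monic_X_add_C _]
    simp only [natDegree_X_add_C, Finset.sum_const, Finset.card_univ, Fintype.card_fin,
      smul_eq_mul, mul_one]
  have heval : (P.map (algebraMap ℝ ℂ)).eval z = ∏ i, (z + w i) := by
    simp only [hP, eval_prod, eval_add, eval_X, eval_C]
  rw [← heval, eq_div_iff (pow_ne_zero _ hz), eval_map_algebraMap, aeval_eq_sum_range, hdeg,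
    Finset.sum_range_succ, ← hdeg, hmonic.coeff_natDegree, hdeg, add_mul, one_mul,
    Finset.sum_mul, add_comm]
  simp only [one_smul, Complex.real_smul]
  congr 1
  refine Finset.sum_congr rfl fun k hk => ?_
  rw [div_mul_eq_mul_div, div_eq_iff (pow_ne_zero _ hz), mul_assoc, ← pow_add,
    Nat.add_sub_cancel' (Finset.mem_range.mp hk).le]

lemma exists_mem_Ioo_eval_ne_zero {B : ℝ[X]} (hB : B ≠ 0) {a b : ℝ} (hab : a < b) :
    ∃ x ∈ Ioo a b, B.eval x ≠ 0 := by
  by_contra! h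
  exact hB (eq_zero_of_infinite_isRoot B ((Ioo_infinite hab).mono h))

lemma laplaceIntegrable_of_laplace_eq_div {B : ℝ[X]} (hB : B ≠ 0) {D : ℂ → ℂ} {σ : ℝ}
    (hD : ∀ s : ℂ, σ < s.re → D s ≠ 0)
    (hf : ∀ s : ℂ, σ < s.re → laplace f s = (B.map (algebraMap ℝ ℂ)).eval s / D s)
    (hs : σ < s.re) : LaplaceIntegrable f s := by
  obtain ⟨x, hx, hBx⟩ := exists_mem_Ioo_eval_ne_zero hB hs
  have hxσ : σ < (x : ℂ).re := by simpa using hx.1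
  -- A non-integrable integrand has Bochner integral `0`, so it suffices that `laplace f x ≠ 0`.
  refine LaplaceIntegrable.mono_re (Integrable.of_integral_ne_zero ?_) (s₀ := x)
    (by simpa using hx.2.le)
  rw [← laplace, hf x hxσ]
  refine div_ne_zero ?_ (hD x hxσ)
  rw [← Complex.coe_algebraMap, eval_map_apply, Complex.coe_algebraMap]
  exact Complex.ofReal_ne_zero.mpr hBx

end

theorem stmt_18_general (n : ℕ) (hn : 0 < n) (p : Fin n → ℂ)
    (hconj : ∃ e : Equiv.Perm (Fin n), ∀ i, p (e i) = (starRingEnd ℂ) (p i))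
    (B : Polynomial ℝ)
    (h' : ℝ → ℝ)
    (hlaplace : ∀ s : ℂ, (∀ i, (p i).re < s.re) →
      ∫ t in Set.Ioi (0:ℝ), (h' t : ℂ) * Complex.exp (-s * t)
        = (B.map (algebraMap ℝ ℂ)).eval s / ∏ i, (s - p i))
    (hpos : ∀ t : ℝ, 0 ≤ t → 0 ≤ h' t)
    (σ : ℝ)
    (hσ : σ = Finset.univ.sup' (Finset.univ_nonempty_iff.mpr
        (Fin.pos_iff_nonempty.mp hn)) (fun i => (p i).re)) :
    ∃ h : ℝ → ℝ,
      (∀ s : ℂ, σ < s.re →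
        ∫ t in Set.Ioi (0:ℝ), (h t : ℂ) * Complex.exp (-s * t)
          = (B.map (algebraMap ℝ ℂ)).eval s / (s - (σ : ℂ)) ^ n) ∧
      (∀ t : ℝ, 0 ≤ t → 0 ≤ h t) := by
  rcases eq_or_ne B 0 with rfl | hB
  · exact ⟨0, fun s _ => by simp, fun _ _ => le_rfl⟩
  have hσle (i : Fin n) : (p i).re ≤ σ :=
    hσ ▸ Finset.le_sup' (fun j => (p j).re) (Finset.mem_univ i)
  have hpole (s : ℂ) (hs : σ < s.re) (i : Fin n) : (p i).re < s.re := (hσle i).trans_lt hs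
  obtain ⟨e, he⟩ := hconj
  obtain ⟨P, hPnonneg, hP⟩ := exists_nonneg_coeff_map_eq_prod_X_add_C (fun i => (σ : ℂ) - p i) e
    (fun i => by simp [he]) (fun i => by simpa using hσle i)
  have hD (s : ℂ) (hs : σ < s.re) : ∏ i, (s - p i) ≠ 0 :=
    Finset.prod_ne_zero_iff.mpr fun i _ => sub_ne_zero.mpr fun h => (hpole s hs i).ne (by rw [h])
  refine ⟨h' + causalConv (polyExpKernel P n σ) h', fun s hs => ?_, fun t ht =>
    add_nonneg (hpos t ht) (causalConv_nonneg (fun u hu => polyExpKernel_nonneg hPnonneg n σ hu.le)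
      (fun u hu => hpos u hu.le) t)⟩
  have hh' : LaplaceIntegrable h' s :=
    laplaceIntegrable_of_laplace_eq_div hB hD (fun s hs => hlaplace s (hpole s hs)) hs
  obtain ⟨hKi, hK⟩ := laplace_polyExpKernel P n hs
  obtain ⟨hci, hc⟩ := laplace_causalConv hKi hh'
  have hz : s - σ ≠ 0 := fun h => by simp [sub_eq_zero.mp h] at hs
  have hratio := one_add_sum_coeff_div_pow_eq_prod hP hz
  simp only [sub_add_sub_cancel] at hratio
  change laplace (h' + _) s = _
  rw [laplace_add hh' hci, hc, hK, laplace, hlaplace s (hpole s hs), ← one_add_mul, hratio,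
    mul_comm, div_mul_div_cancel₀ (hD s hs)]

theorem stmt_18 (n : ℕ) (hn : 0 < n) (p : Fin n → ℂ)
    (hre : ∀ i, (p i).re < 0)
    (hconj : ∃ e : Equiv.Perm (Fin n), ∀ i, p (e i) = (starRingEnd ℂ) (p i))
    (B : Polynomial ℝ) (hdeg : B.natDegree < n)
    (h' : ℝ → ℝ)
    (hlaplace : ∀ s : ℂ, (∀ i, (p i).re < s.re) →
      ∫ t in Set.Ioi (0:ℝ), (h' t : ℂ) * Complex.exp (-s * t)
        = (B.map (algebraMap ℝ ℂ)).eval s / ∏ i, (s - p i))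
    (hpos : ∀ t : ℝ, 0 ≤ t → 0 ≤ h' t)
    (σ : ℝ)
    (hσ : σ = Finset.univ.sup' (Finset.univ_nonempty_iff.mpr
        (Fin.pos_iff_nonempty.mp hn)) (fun i => (p i).re)) :
    ∃ h : ℝ → ℝ,
      (∀ s : ℂ, σ < s.re →
        ∫ t in Set.Ioi (0:ℝ), (h t : ℂ) * Complex.exp (-s * t)
          = (B.map (algebraMap ℝ ℂ)).eval s / (s - (σ : ℂ)) ^ n) ∧
      (∀ t : ℝ, 0 ≤ t → 0 ≤ h t) :=
  stmt_18_general n hn p hconj B h' hlaplace hpos σ hσ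
end
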